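/- arXiv:2309.08920 — 2 statements merged into one kernel-verified Lean document; each statement's English description precedes it below -/
import Mathlib

section
/- Let q be odd, C_1 and C_2 linear codes of length n over F_q, and C = {[u+v, u−v] : u ∈ C_1, v ∈ C_2}. Suppose there exists a nonzero x ∈ C_1 ∩ C_2 with w_b(x) = min{d_b(C_1), d_b(C_2)} and a hole H of the Hamming support of x with |H| ≥ b−1 and H containing coordinate 1 or coordinate n. Then d_b(C) = min{d_b(C_1), d_b(C_2)}. -/
open scoped Classical
open Finset

noncomputable def bwt {F : Type*} [Field F] (n b : ℕ) [NeZero n] (x : ZMod n → F) : ℕ :=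
  (Finset.univ.filter (fun i : ZMod n => ∃ j < b, x (i + (j : ZMod n)) ≠ 0)).card

noncomputable def bDist {F : Type*} [Field F] (n b : ℕ) [NeZero n]
    (C : Set (ZMod n → F)) : ℕ :=
  sInf {w | ∃ u ∈ C, ∃ v ∈ C, u ≠ v ∧ bwt n b (u - v) = w}

def IsHole {n : ℕ} [NeZero n] (J H : Finset (ZMod n)) : Prop :=
  ∃ (a : ZMod n) (h : ℕ), 0 < h ∧
    H = Finset.image (fun t : ℕ => a + (t : ZMod n) + 1) (Finset.range h) ∧
    (∀ x ∈ H, x ∉ J) ∧ a ∈ J ∧ a + (h : ZMod n) + 1 ∈ J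

noncomputable def hSupp {F : Type*} [Field F] {n : ℕ} [NeZero n] (x : ZMod n → F) :
    Finset (ZMod n) :=
  Finset.univ.filter (fun i => x i ≠ 0)
instance neZeroTwoMul {n : ℕ} [NeZero n] : NeZero (2 * n) :=
  ⟨Nat.mul_ne_zero two_ne_zero (NeZero.ne n)⟩

/-- The vector `[u+v, u-v]` of length `2n` (0-based coordinates). -/
noncomputable def pmVec {F : Type*} [Field F] (n : ℕ) [NeZero n]
    (u v : ZMod n → F) : ZMod (2 * n) → F :=
  fun k =>
    if k.val < n then u ((k.val : ℕ) : ZMod n) + v ((k.val : ℕ) : ZMod n)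
    else u ((k.val - n : ℕ) : ZMod n) - v ((k.val - n : ℕ) : ZMod n)

/-- The `[u+v, u-v]`-construction `C = {[u+v, u-v] : u ∈ C₁, v ∈ C₂}`. -/
noncomputable def pmCode {F : Type*} [Field F] (n : ℕ) [NeZero n]
    (C₁ C₂ : Submodule F (ZMod n → F)) : Set (ZMod (2 * n) → F) :=
  {w | ∃ u ∈ C₁, ∃ v ∈ C₂, w = pmVec n u v}

section Aux

variable {F : Type*} [Field F] {n : ℕ} [NeZero n]

lemma two_ne_zero_of_odd [Fintype F] (hodd : Odd (Fintype.card F)) : (2 : F) ≠ 0 := by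
  intro h
  have hdvd : ringChar F ∣ 2 := ringChar.dvd (by exact_mod_cast h)
  have h2 : ringChar F = 2 :=
    ((Nat.dvd_prime Nat.prime_two).mp hdvd).resolve_left CharP.ringChar_ne_one
  have := FiniteField.even_card_of_char_two h2
  rcases hodd with ⟨k, hk⟩
  omega

lemma val_add_nat (k : ZMod (2*n)) (j : ℕ) (hj : j < 2*n) :
    (k + (j : ZMod (2*n))).val = (k.val + j) % (2*n) := by
  rw [ZMod.val_add, ZMod.val_natCast, Nat.mod_eq_of_lt hj]

lemma pair_zero (h2 : (2:F) ≠ 0) (u v : ZMod n → F) (K : ZMod (2*n))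
    (hK : pmVec n u v K = 0) (hK' : pmVec n u v (K + (n : ZMod (2*n))) = 0) :
    u ((K.val : ℕ) : ZMod n) = 0 ∧ v ((K.val : ℕ) : ZMod n) = 0 := by
  have hn : 0 < n := Nat.pos_of_ne_zero (NeZero.ne n)
  have hKv : K.val < 2*n := ZMod.val_lt K
  have hval : (K + (n:ZMod (2*n))).val = (K.val + n) % (2*n) := val_add_nat K n (by omega)
  rcases lt_or_ge K.val n with h | h
  · have hv2 : (K + (n:ZMod (2*n))).val = K.val + n := by
      rw [hval, Nat.mod_eq_of_lt (by omega)]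
    simp only [pmVec] at hK hK'
    rw [if_pos h] at hK
    rw [hv2, if_neg (by omega)] at hK'
    rw [show K.val + n - n = K.val from by omega] at hK'
    constructor
    · have h0 : (2:F) * u ((K.val:ℕ) : ZMod n) = 0 := by linear_combination hK + hK'
      exact (mul_eq_zero.mp h0).resolve_left h2
    · have h0 : (2:F) * v ((K.val:ℕ) : ZMod n) = 0 := by linear_combination hK - hK'
      exact (mul_eq_zero.mp h0).resolve_left h2
  · have hv2 : (K + (n:ZMod (2*n))).val = K.val - n := by
      rw [hval, show K.val + n = (K.val - n) + 2*n from by omega, Nat.add_mod_right,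
        Nat.mod_eq_of_lt (by omega)]
    simp only [pmVec] at hK hK'
    rw [if_neg (by omega)] at hK
    rw [hv2, if_pos (by omega)] at hK'
    have hc : ((K.val : ℕ) : ZMod n) = ((K.val - n : ℕ) : ZMod n) := by
      conv_lhs => rw [show K.val = (K.val - n) + n from by omega]
      push_cast
      rw [ZMod.natCast_self, add_zero]
    rw [hc]
    constructor
    · have h0 : (2:F) * u ((K.val - n : ℕ) : ZMod n) = 0 := by linear_combination hK + hK'
      exact (mul_eq_zero.mp h0).resolve_left h2
    · have h0 : (2:F) * v ((K.val - n : ℕ) : ZMod n) = 0 := by linear_combination hK' - hK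
      exact (mul_eq_zero.mp h0).resolve_left h2

/-- reduction mod n of a lift of i.val is i -/
lemma pi_lift (i : ZMod n) :
    (ZMod.castHom (dvd_mul_left n 2) (ZMod n)) ((i.val : ZMod (2*n))) = i := by
  rw [map_natCast]
  exact ZMod.natCast_rightInverse i

lemma bwt_le_pm (h2 : (2:F) ≠ 0) {b : ℕ} (hbn : b ≤ n) (u v : ZMod n → F) :
    bwt n b u ≤ bwt (2*n) b (pmVec n u v) := by
  classical
  have hn : 0 < n := Nat.pos_of_ne_zero (NeZero.ne n)
  unfold bwt
  set g : ZMod n → ZMod (2*n) := fun i =>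
    if ∃ j, j < b ∧ pmVec n u v (((i.val : ℕ) : ZMod (2*n)) + (j : ZMod (2*n))) ≠ 0
    then ((i.val : ℕ) : ZMod (2*n)) else ((i.val : ℕ) : ZMod (2*n)) + (n : ZMod (2*n))
    with hg
  have hπg : ∀ i : ZMod n, (ZMod.castHom (dvd_mul_left n 2) (ZMod n)) (g i) = i := by
    intro i
    by_cases hc : ∃ j, j < b ∧
        pmVec n u v (((i.val : ℕ) : ZMod (2*n)) + (j : ZMod (2*n))) ≠ 0
    · rw [hg]
      simp only [if_pos hc]
      exact pi_lift i
    · rw [hg]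
      simp only [if_neg hc]
      rw [map_add, pi_lift, map_natCast, ZMod.natCast_self, add_zero]
  apply Finset.card_le_card_of_injOn g
  · intro i hi
    simp only [Finset.mem_coe, Finset.mem_filter, Finset.mem_univ, true_and] at hi ⊢
    obtain ⟨j, hj, hij⟩ := hi
    by_cases hc : ∃ j, j < b ∧
        pmVec n u v (((i.val : ℕ) : ZMod (2*n)) + (j : ZMod (2*n))) ≠ 0
    · rw [hg]; simp only [if_pos hc]; exact hc
    · rw [hg]; simp only [if_neg hc]
      push_neg at hc
      refine ⟨j, hj, ?_⟩
      set K := ((i.val : ℕ) : ZMod (2*n)) + (j : ZMod (2*n)) with hKdef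
      have hiv : i.val < n := ZMod.val_lt i
      have hKval : K.val = i.val + j := by
        rw [hKdef, val_add_nat _ j (by omega), ZMod.val_natCast,
          Nat.mod_eq_of_lt (show i.val < 2*n by omega),
          Nat.mod_eq_of_lt (show i.val + j < 2*n by omega)]
      have hcast : ((K.val : ℕ) : ZMod n) = i + (j : ZMod n) := by
        rw [hKval]
        push_cast
        rw [ZMod.natCast_rightInverse i]
      have hgoal : ((i.val : ℕ) : ZMod (2*n)) + (n : ZMod (2*n)) + (j : ZMod (2*n))
          = K + (n : ZMod (2*n)) := by rw [hKdef]; ring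
      rw [hgoal]
      intro hz'
      have hboth := pair_zero h2 u v K (hc j hj) hz'
      rw [hcast] at hboth
      exact hij hboth.1
  · intro a ha c hc hac
    have := congrArg (ZMod.castHom (dvd_mul_left n 2) (ZMod n)) hac
    rwa [hπg a, hπg c] at this

lemma pmVec_swap_zero (u v : ZMod n → F) (k : ZMod (2*n)) :
    pmVec n v u k = 0 ↔ pmVec n u v k = 0 := by
  simp only [pmVec]
  split
  · rw [add_comm]
  · rw [sub_eq_zero, sub_eq_zero, eq_comm]

lemma bwt_pm_swap (u v : ZMod n → F) {b : ℕ} :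
    bwt (2*n) b (pmVec n v u) = bwt (2*n) b (pmVec n u v) := by
  unfold bwt
  congr 1
  apply Finset.filter_congr
  intro k _
  constructor
  · rintro ⟨j, hj, h⟩; exact ⟨j, hj, fun hz => h ((pmVec_swap_zero u v _).mpr hz)⟩
  · rintro ⟨j, hj, h⟩; exact ⟨j, hj, fun hz => h ((pmVec_swap_zero u v _).mp hz)⟩

lemma bwt_le_pm' (h2 : (2:F) ≠ 0) {b : ℕ} (hbn : b ≤ n) (u v : ZMod n → F) :
    bwt n b v ≤ bwt (2*n) b (pmVec n u v) := by
  rw [← bwt_pm_swap]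
  exact bwt_le_pm h2 hbn v u

lemma hole_claim {x : ZMod n → F} {H : Finset (ZMod n)} (hH : IsHole (hSupp x) H)
    {b : ℕ} (hHcard : b - 1 ≤ H.card)
    (hHend : (0 : ZMod n) ∈ H ∨ ((n - 1 : ℕ) : ZMod n) ∈ H)
    {s s' : ZMod n} (hs : x s ≠ 0) (hs' : x s' ≠ 0) :
    s.val + b ≤ n + s'.val := by
  obtain ⟨a, h, hpos, hHeq, hdis, haJ, h2J⟩ := hH
  have hn : 0 < n := Nat.pos_of_ne_zero (NeZero.ne n)
  have e1 : ((n - 1 : ℕ) : ZMod n) + 1 = 0 := by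
    rw [show ((n-1:ℕ):ZMod n) + 1 = ((n-1+1 : ℕ) : ZMod n) from by push_cast; ring,
      show n - 1 + 1 = n from by omega, ZMod.natCast_self]
  have hhn : h < n := by
    by_contra hcon
    push_neg at hcon
    have haH : a ∈ H := by
      rw [hHeq]
      simp only [Finset.mem_image, Finset.mem_range]
      refine ⟨n - 1, by omega, ?_⟩
      rw [add_assoc, e1, add_zero]
    exact hdis a haH haJ
  have hbh : b ≤ h + 1 := by
    have : H.card ≤ h := by
      rw [hHeq]
      exact (Finset.card_image_le).trans (by rw [Finset.card_range])
    omega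
  obtain ⟨m, hmh, ham⟩ : ∃ m : ℕ, m ≤ h ∧ a + 1 = -(m : ZMod n) := by
    rcases hHend with h0 | h1
    · rw [hHeq] at h0
      simp only [Finset.mem_image, Finset.mem_range] at h0
      obtain ⟨t₀, ht₀, heq⟩ := h0
      exact ⟨t₀, by omega, by linear_combination heq⟩
    · rw [hHeq] at h1
      simp only [Finset.mem_image, Finset.mem_range] at h1
      obtain ⟨t₀, ht₀, heq⟩ := h1
      refine ⟨t₀ + 1, by omega, ?_⟩
      push_cast
      linear_combination heq + e1
  have key : ∀ t : ZMod n, x t ≠ 0 → h ≤ (t + (m : ZMod n)).val := by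
    intro t ht
    by_contra hcon
    push_neg at hcon
    have hrc : (((t + (m:ZMod n)).val : ℕ) : ZMod n) = t + (m:ZMod n) :=
      ZMod.natCast_rightInverse _
    have htH : t ∈ H := by
      rw [hHeq]
      simp only [Finset.mem_image, Finset.mem_range]
      exact ⟨(t + (m:ZMod n)).val, hcon, by linear_combination hrc + ham⟩
    exact hdis t htH (by simp [hSupp, ht])
  have valeq : ∀ t : ZMod n, x t ≠ 0 → t.val = (t + (m : ZMod n)).val - m := by
    intro t ht
    have hf : h ≤ (t + (m:ZMod n)).val := key t ht
    have hfn : (t + (m:ZMod n)).val < n := ZMod.val_lt _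
    have hrc : (((t + (m:ZMod n)).val : ℕ) : ZMod n) = t + (m:ZMod n) :=
      ZMod.natCast_rightInverse _
    have ht' : t = (((t + (m:ZMod n)).val - m : ℕ) : ZMod n) := by
      have : ((((t + (m:ZMod n)).val - m : ℕ)) : ZMod n)
          = (((t + (m:ZMod n)).val : ℕ) : ZMod n) - (m : ZMod n) := by
        rw [Nat.cast_sub (by omega)]
      rw [this, hrc]
      ring
    conv_lhs => rw [ht']
    rw [ZMod.val_cast_of_lt (by omega)]
  have h1 := valeq s hs
  have h2 := valeq s' hs'
  have f1 : h ≤ (s + (m:ZMod n)).val := key s hs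
  have f2 : h ≤ (s' + (m:ZMod n)).val := key s' hs'
  have g1 : (s + (m:ZMod n)).val < n := ZMod.val_lt _
  have g2 : (s' + (m:ZMod n)).val < n := ZMod.val_lt _
  omega

end Aux

section Aux2

variable {F : Type*} [Field F] {n : ℕ} [NeZero n]

lemma fiber_struct (k k' : ZMod (2*n)) (hne : k ≠ k')
    (hπ : (ZMod.castHom (dvd_mul_left n 2) (ZMod n)) k
        = (ZMod.castHom (dvd_mul_left n 2) (ZMod n)) k') :
    k' = k + (n : ZMod (2*n)) ∨ k = k' + (n : ZMod (2*n)) := by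
  have hn : 0 < n := Nat.pos_of_ne_zero (NeZero.ne n)
  have hcast : ∀ z : ZMod (2*n),
      (ZMod.castHom (dvd_mul_left n 2) (ZMod n)) z = ((z.val : ℕ) : ZMod n) := by
    intro z
    conv_lhs => rw [← ZMod.natCast_rightInverse z]
    rw [map_natCast]
  rw [hcast, hcast] at hπ
  have hmod : k.val % n = k'.val % n := by
    have := congrArg ZMod.val hπ
    rwa [ZMod.val_natCast, ZMod.val_natCast] at this
  have hv : k.val < 2*n := ZMod.val_lt k
  have hv' : k'.val < 2*n := ZMod.val_lt k'
  obtain ⟨q, hq, r, hr, hk⟩ : ∃ q, q < 2 ∧ ∃ r, r < n ∧ k.val = r + n * q :=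
    ⟨k.val / n, (Nat.div_lt_iff_lt_mul hn).mpr (by omega), k.val % n,
      Nat.mod_lt _ hn, (Nat.mod_add_div k.val n).symm⟩
  obtain ⟨q', hq', r', hr', hk'⟩ : ∃ q, q < 2 ∧ ∃ r, r < n ∧ k'.val = r + n * q :=
    ⟨k'.val / n, (Nat.div_lt_iff_lt_mul hn).mpr (by omega), k'.val % n,
      Nat.mod_lt _ hn, (Nat.mod_add_div k'.val n).symm⟩
  have hrr : r = r' := by
    have e1 : k.val % n = r := by
      rw [hk, Nat.add_mul_mod_self_left, Nat.mod_eq_of_lt hr]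
    have e2 : k'.val % n = r' := by
      rw [hk', Nat.add_mul_mod_self_left, Nat.mod_eq_of_lt hr']
    rw [e1, e2] at hmod
    exact hmod
  have hvne : k.val ≠ k'.val := fun hc => hne (ZMod.val_injective _ hc)
  have hvals : k'.val = k.val + n ∨ k.val = k'.val + n := by
    rcases (by omega : q = 0 ∨ q = 1) with rfl | rfl <;>
      rcases (by omega : q' = 0 ∨ q' = 1) with rfl | rfl <;> omega
  rcases hvals with hvals | hvals
  · left
    apply ZMod.val_injective
    rw [val_add_nat k n (by omega), hvals, Nat.mod_eq_of_lt (by omega)]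
  · right
    apply ZMod.val_injective
    rw [val_add_nat k' n (by omega), hvals, Nat.mod_eq_of_lt (by omega)]

lemma nn_zero : (n : ZMod (2*n)) + (n : ZMod (2*n)) = 0 := by
  rw [← Nat.cast_add, show n + n = 2*n from by ring, ZMod.natCast_self]

lemma no_double {x : ZMod n → F} {b : ℕ} (hbn : b ≤ n)
    (hC : ∀ s s' : ZMod n, x s ≠ 0 → x s' ≠ 0 → s.val + b ≤ n + s'.val)
    (k : ZMod (2*n)) (hk : k.val < n)
    (hin : ∃ j, j < b ∧ pmVec n x x (k + (j : ZMod (2*n))) ≠ 0)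
    (hin' : ∃ j, j < b ∧ pmVec n x x (k + (n : ZMod (2*n)) + (j : ZMod (2*n))) ≠ 0) :
    False := by
  have hn : 0 < n := Nat.pos_of_ne_zero (NeZero.ne n)
  obtain ⟨j, hj, hne⟩ := hin
  obtain ⟨j', hj', hne'⟩ := hin'
  -- first window
  have hKval : (k + (j : ZMod (2*n))).val = k.val + j :=
    (val_add_nat k j (by omega)).trans (Nat.mod_eq_of_lt (by omega))
  have hlt1 : (k + (j : ZMod (2*n))).val < n := by
    by_contra hge
    apply hne
    simp only [pmVec]
    rw [if_neg hge]
    exact sub_self _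
  have h1 : k.val + j < n ∧ x (((k.val + j : ℕ)) : ZMod n) ≠ 0 := by
    rw [hKval] at hlt1
    refine ⟨hlt1, ?_⟩
    intro hz
    apply hne
    simp only [pmVec, hKval]
    rw [if_pos hlt1, hz, add_zero]
  -- second window
  have hKval2 : (k + (n : ZMod (2*n)) + (j' : ZMod (2*n))).val = k.val + j' - n ∧
      n ≤ k.val + j' := by
    have hkn : (k + (n : ZMod (2*n))).val = k.val + n :=
      (val_add_nat k n (by omega)).trans (Nat.mod_eq_of_lt (by omega))
    have hv := val_add_nat (k + (n : ZMod (2*n))) j' (by omega)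
    rw [hkn] at hv
    by_cases hc : k.val + n + j' < 2*n
    · rw [Nat.mod_eq_of_lt hc] at hv
      exfalso
      apply hne'
      simp only [pmVec, hv]
      rw [if_neg (by omega : ¬ (k.val + n + j' < n))]
      exact sub_self _
    · rw [show k.val + n + j' = (k.val + j' - n) + 2*n from by omega,
        Nat.add_mod_right, Nat.mod_eq_of_lt (by omega)] at hv
      exact ⟨hv, by omega⟩
  have h2 : x (((k.val + j' - n : ℕ)) : ZMod n) ≠ 0 := by
    intro hz
    apply hne'
    simp only [pmVec, hKval2.1]
    rw [if_pos (by omega : k.val + j' - n < n), hz, add_zero]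
  have hCs := hC _ _ h1.2 h2
  rw [ZMod.val_cast_of_lt h1.1, ZMod.val_cast_of_lt (by omega : k.val + j' - n < n)] at hCs
  omega

lemma bwt_pm_diag {x : ZMod n → F} {b : ℕ} (h2 : (2:F) ≠ 0) (hbn : b ≤ n)
    (hC : ∀ s s' : ZMod n, x s ≠ 0 → x s' ≠ 0 → s.val + b ≤ n + s'.val) :
    bwt (2*n) b (pmVec n x x) = bwt n b x := by
  have hn : 0 < n := Nat.pos_of_ne_zero (NeZero.ne n)
  refine le_antisymm ?_ (bwt_le_pm h2 hbn x x)
  unfold bwt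
  set π := ZMod.castHom (dvd_mul_left n 2) (ZMod n) with hπdef
  have hcast : ∀ z : ZMod (2*n), π z = ((z.val : ℕ) : ZMod n) := by
    intro z
    conv_lhs => rw [← ZMod.natCast_rightInverse z]
    rw [hπdef, map_natCast]
  apply Finset.card_le_card_of_injOn π
  · intro k hk
    simp only [Finset.mem_coe, Finset.mem_filter, Finset.mem_univ, true_and] at hk ⊢
    obtain ⟨j, hj, hne⟩ := hk
    refine ⟨j, hj, ?_⟩
    have hlt : (k + (j : ZMod (2*n))).val < n := by
      by_contra hge
      apply hne
      simp only [pmVec]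
      rw [if_neg hge]
      exact sub_self _
    have hx : x (((k + (j : ZMod (2*n))).val : ℕ) : ZMod n) ≠ 0 := by
      intro hz
      apply hne
      simp only [pmVec]
      rw [if_pos hlt, hz, add_zero]
    have : π k + (j : ZMod n) = (((k + (j : ZMod (2*n))).val : ℕ) : ZMod n) := by
      rw [← hcast, map_add, map_natCast]
    rwa [this]
  · intro k hk k' hk' hππ
    by_contra hne
    simp only [Finset.coe_filter, Set.mem_setOf_eq, Finset.mem_univ, true_and] at hk hk'
    rcases fiber_struct k k' hne hππ with hfs | hfs
    · rcases lt_or_ge k.val n with hlt | hge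
      · exact no_double hbn hC k hlt hk (by rw [← hfs]; exact hk')
      · have hkv : (k + (n : ZMod (2*n))).val = k.val - n := by
          rw [val_add_nat k n (by omega),
            show k.val + n = (k.val - n) + 2*n from by
              have := ZMod.val_lt k; omega,
            Nat.add_mod_right, Nat.mod_eq_of_lt (by have := ZMod.val_lt k; omega)]
        apply no_double hbn hC (k + (n : ZMod (2*n)))
          (by rw [hkv]; have := ZMod.val_lt k; omega)
          (by rw [← hfs]; exact hk')
        rw [add_assoc, nn_zero, add_zero]
        exact hk
    · rcases lt_or_ge k'.val n with hlt | hge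
      · exact no_double hbn hC k' hlt hk' (by rw [← hfs]; exact hk)
      · have hkv : (k' + (n : ZMod (2*n))).val = k'.val - n := by
          rw [val_add_nat k' n (by omega),
            show k'.val + n = (k'.val - n) + 2*n from by
              have := ZMod.val_lt k'; omega,
            Nat.add_mod_right, Nat.mod_eq_of_lt (by have := ZMod.val_lt k'; omega)]
        apply no_double hbn hC (k' + (n : ZMod (2*n)))
          (by rw [hkv]; have := ZMod.val_lt k'; omega)
          (by rw [← hfs]; exact hk)
        rw [add_assoc, nn_zero, add_zero]
        exact hk'

lemma pmVec_sub (u v u' v' : ZMod n → F) :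
    pmVec n u v - pmVec n u' v' = pmVec n (u - u') (v - v') := by
  funext k
  simp only [Pi.sub_apply, pmVec]
  split <;> ring

lemma pmVec_zero : pmVec n (0 : ZMod n → F) 0 = 0 := by
  funext k
  simp [pmVec]

end Aux2

/-- for `q` odd, if there is a nonzero `x ∈ C₁ ∩ C₂` with
`w_b(x) = min{d_b(C₁), d_b(C₂)}` having a hole `H` of its support with
`|H| ≥ b-1` containing coordinate 1 (index `0`) or coordinate `n`
(index `n-1`), then `d_b(C) = min{d_b(C₁), d_b(C₂)}`. -/
theorem stmt17 {F : Type*} [Field F] [Fintype F] (hodd : Odd (Fintype.card F))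
    {n b : ℕ} [NeZero n] (hb1 : 1 ≤ b) (hbn : b ≤ n)
    (C₁ C₂ : Submodule F (ZMod n → F))
    (h1 : ∃ x ∈ C₁, x ≠ (0 : ZMod n → F)) (h2 : ∃ x ∈ C₂, x ≠ (0 : ZMod n → F))
    (x : ZMod n → F) (hx1 : x ∈ C₁) (hx2 : x ∈ C₂) (hx0 : x ≠ 0)
    (hw : bwt n b x
      = min (bDist n b (C₁ : Set (ZMod n → F))) (bDist n b (C₂ : Set (ZMod n → F))))
    (H : Finset (ZMod n)) (hH : IsHole (hSupp x) H) (hHcard : b - 1 ≤ H.card)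
    (hHend : (0 : ZMod n) ∈ H ∨ ((n - 1 : ℕ) : ZMod n) ∈ H) :
    bDist (2 * n) b (pmCode n C₁ C₂)
      = min (bDist n b (C₁ : Set (ZMod n → F)))
          (bDist n b (C₂ : Set (ZMod n → F))) := by
  have h2F : (2:F) ≠ 0 := two_ne_zero_of_odd hodd
  have hC : ∀ s s' : ZMod n, x s ≠ 0 → x s' ≠ 0 → s.val + b ≤ n + s'.val :=
    fun s s' hs hs' => hole_claim hH hHcard hHend hs hs'
  have hdiag := bwt_pm_diag (x := x) h2F hbn hC
  have hxx0 : pmVec n x x ≠ (0 : ZMod (2*n) → F) := by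
    obtain ⟨i, hi⟩ := Function.ne_iff.mp hx0
    simp only [Pi.zero_apply] at hi
    intro h0
    have hval : ((i.val : ZMod (2*n))).val = i.val :=
      ZMod.val_cast_of_lt (by have := ZMod.val_lt i; omega)
    have hc := congrFun h0 ((i.val : ℕ) : ZMod (2*n))
    simp only [pmVec, Pi.zero_apply, hval] at hc
    rw [if_pos (ZMod.val_lt i)] at hc
    rw [ZMod.natCast_rightInverse i] at hc
    have h20 : (2:F) * x i = 0 := by linear_combination hc
    exact hi ((mul_eq_zero.mp h20).resolve_left h2F)
  have hmem : ∃ u ∈ pmCode n C₁ C₂, ∃ v ∈ pmCode n C₁ C₂, u ≠ v ∧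
      bwt (2*n) b (u - v) = bwt n b x := by
    refine ⟨pmVec n x x, ⟨x, hx1, x, hx2, rfl⟩,
      0, ⟨0, zero_mem _, 0, zero_mem _, pmVec_zero.symm⟩, hxx0, ?_⟩
    rw [sub_zero, hdiag]
  refine le_antisymm ?_ ?_
  · rw [← hw]
    exact Nat.sInf_le hmem
  · apply le_csInf ⟨bwt n b x, hmem⟩
    rintro w ⟨w1, ⟨u1, hu1, v1, hv1, rfl⟩, w2, ⟨u2, hu2, v2, hv2, rfl⟩, hne, rfl⟩
    rw [pmVec_sub]
    have hnz : u1 - u2 ≠ 0 ∨ v1 - v2 ≠ 0 := by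
      by_contra hcon
      push_neg at hcon
      apply hne
      have h0 : pmVec n u1 v1 - pmVec n u2 v2 = 0 := by
        rw [pmVec_sub, hcon.1, hcon.2, pmVec_zero]
      exact sub_eq_zero.mp h0
    rcases hnz with hnz | hnz
    · refine le_trans (min_le_left _ _) (le_trans (Nat.sInf_le ?_) (bwt_le_pm h2F hbn _ _))
      exact ⟨u1 - u2, sub_mem hu1 hu2, 0, zero_mem _, hnz, by rw [sub_zero]⟩
    · refine le_trans (min_le_right _ _) (le_trans (Nat.sInf_le ?_) (bwt_le_pm' h2F hbn _ _))
      exact ⟨v1 - v2, sub_mem hv1 hv2, 0, zero_mem _, hnz, by rw [sub_zero]⟩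
end

section
/- Let C be an [n, n−2]_q linear code with n ≥ 3. Then one of the following holds: (a) d_b(C) = b for every 1 ≤ b ≤ n−1; (b) d_b(C) = b+1 for every 1 ≤ b ≤ n−1; (c) d_1(C) = 2 and d_b(C) = min{b+2, n} for every 2 ≤ b ≤ n−1; (d) d_b(C) = min{b+2, n} for every 1 ≤ b ≤ n−1. Cases (a), (b)-or-(c), and (d) correspond respectively to d_1(C) = 1, 2, and 3. -/
open scoped Classical
open Finset

section Aux

variable {F : Type*} [Field F] {n : ℕ} [NeZero n]

lemma exists_supp_ne {x : ZMod n → F} (hx : x ≠ 0) : ∃ a, x a ≠ 0 := by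
  by_contra h
  push_neg at h
  exact hx (funext h)

lemma bwt_le (b : ℕ) (x : ZMod n → F) : bwt n b x ≤ n := by
  rw [bwt]
  calc _ ≤ (Finset.univ : Finset (ZMod n)).card := Finset.card_le_card (Finset.filter_subset _ _)
  _ = n := by rw [Finset.card_univ, ZMod.card]

lemma bwt_one_eq (x : ZMod n → F) : bwt n 1 x = (hSupp x).card := by
  rw [bwt, hSupp]
  congr 1
  apply Finset.filter_congr
  intro i _
  constructor
  · rintro ⟨j, hj, hx⟩
    interval_cases j
    simpa using hx
  · intro h
    exact ⟨0, one_pos, by simpa using h⟩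

lemma bwt_compl (b : ℕ) (x : ZMod n → F) :
    bwt n b x = n - (Finset.univ.filter (fun i : ZMod n => ∀ j < b, x (i + (j : ZMod n)) = 0)).card := by
  have h := Finset.card_filter_add_card_filter_not
    (s := (Finset.univ : Finset (ZMod n))) (p := fun i : ZMod n => ∃ j < b, x (i + (j : ZMod n)) ≠ 0)
  rw [Finset.card_univ, ZMod.card] at h
  have h2 : (Finset.univ.filter (fun i : ZMod n => ¬ ∃ j < b, x (i + (j : ZMod n)) ≠ 0)) =
      (Finset.univ.filter (fun i : ZMod n => ∀ j < b, x (i + (j : ZMod n)) = 0)) := by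
    apply Finset.filter_congr
    intro i _
    push_neg
    rfl
  rw [h2] at h
  rw [bwt]
  omega

lemma bwt_succ_ge {x : ZMod n → F} (hx : x ≠ 0) (b : ℕ) :
    min (bwt n b x + 1) n ≤ bwt n (b+1) x := by
  set Zb := (Finset.univ.filter (fun i : ZMod n => ∀ j < b, x (i + (j : ZMod n)) = 0)) with hZb
  set Zs := (Finset.univ.filter (fun i : ZMod n => ∀ j < b + 1, x (i + (j : ZMod n)) = 0)) with hZs
  have hsub : Zs ⊆ Zb := by
    intro i hi
    rw [hZs, Finset.mem_filter] at hi
    rw [hZb, Finset.mem_filter]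
    exact ⟨hi.1, fun j hj => hi.2 j (by omega)⟩
  have hb : bwt n b x = n - Zb.card := bwt_compl b x
  have hs : bwt n (b+1) x = n - Zs.card := bwt_compl (b+1) x
  have hbn : Zb.card ≤ n := by
    calc Zb.card ≤ (Finset.univ : Finset (ZMod n)).card := Finset.card_le_card (Finset.filter_subset _ _)
    _ = n := by rw [Finset.card_univ, ZMod.card]
  rcases Finset.eq_empty_or_nonempty Zb with he | ⟨i, hi⟩
  · have : Zs = ∅ := Finset.subset_empty.mp (he ▸ hsub)
    rw [hs, this]
    simp only [Finset.card_empty, Nat.sub_zero]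
    omega
  · rw [hZb, Finset.mem_filter] at hi
    obtain ⟨s, hs0⟩ : ∃ s, x s ≠ 0 := exists_supp_ne hx
    have hex : ∃ t : ℕ, x (i + (t : ZMod n)) ≠ 0 := by
      refine ⟨(s - i).val, ?_⟩
      rw [show (((s - i).val : ℕ) : ZMod n) = s - i from ZMod.natCast_rightInverse _]
      simpa using hs0
    set t0 := Nat.find hex with ht0
    have hspec : x (i + (t0 : ZMod n)) ≠ 0 := Nat.find_spec hex
    have hmin : ∀ m < t0, x (i + (m : ZMod n)) = 0 := fun m hm => by
      by_contra hc; exact Nat.find_min hex hm hc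
    have hbt0 : b ≤ t0 := by
      by_contra hc
      exact hspec (hi.2 t0 (by omega))
    set i' := i + ((t0 - b : ℕ) : ZMod n) with hi'
    have hi'Zb : i' ∈ Zb := by
      rw [hZb, Finset.mem_filter]
      refine ⟨Finset.mem_univ _, fun j hj => ?_⟩
      have : i' + (j : ZMod n) = i + ((t0 - b + j : ℕ) : ZMod n) := by
        rw [hi']; push_cast; ring
      rw [this]
      exact hmin _ (by omega)
    have hi'not : i' ∉ Zs := by
      rw [hZs, Finset.mem_filter]
      rintro ⟨-, h⟩
      apply hspec
      have : i' + (b : ZMod n) = i + (t0 : ZMod n) := by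
        rw [hi']; push_cast [Nat.cast_sub hbt0]; ring
      rw [← this]
      exact h b (by omega)
    have hsub2 : Zs ⊆ Zb.erase i' := fun a ha =>
      Finset.mem_erase.mpr ⟨fun he => hi'not (he ▸ ha), hsub ha⟩
    have hcard : Zs.card ≤ Zb.card - 1 := by
      calc Zs.card ≤ (Zb.erase i').card := Finset.card_le_card hsub2
      _ = Zb.card - 1 := Finset.card_erase_of_mem hi'Zb
    have hpos : 1 ≤ Zb.card := Finset.card_pos.mpr ⟨i', hi'Zb⟩
    omega

lemma bwt_chain {x : ZMod n → F} (hx : x ≠ 0) (b : ℕ) :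
    ∀ c, b ≤ c → min (bwt n b x + (c - b)) n ≤ bwt n c x := by
  intro c
  induction c with
  | zero => intro h; interval_cases b; simp
  | succ c ih =>
    intro h
    rcases Nat.lt_or_ge b (c+1) with h1 | h1
    · have hc := ih (by omega)
      have hstep := bwt_succ_ge hx c
      have := bwt_le c x
      omega
    · have : b = c + 1 := by omega
      subst this
      simp

lemma bwt_upper {k : ℕ} {c : ZMod n} {x : ZMod n → F}
    (h : ∀ i, x i ≠ 0 → ∃ t < k, i + (t : ZMod n) = c) (b : ℕ) :
    bwt n b x ≤ min (b + k - 1) n := by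
  have hle : bwt n b x ≤ n := bwt_le b x
  have hsub : (Finset.univ.filter (fun i : ZMod n => ∃ j < b, x (i + (j : ZMod n)) ≠ 0)) ⊆
      Finset.image (fun m : ℕ => c - (m : ZMod n)) (Finset.range (b + k - 1)) := by
    intro i hi
    rw [Finset.mem_filter] at hi
    obtain ⟨-, j, hj, hxj⟩ := hi
    obtain ⟨t, ht, hc⟩ := h _ hxj
    refine Finset.mem_image.mpr ⟨j + t, Finset.mem_range.mpr (by omega), ?_⟩
    push_cast
    have : c = i + ((j : ZMod n) + (t : ZMod n)) := by rw [← add_assoc]; exact hc.symm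
    rw [this]; ring
  refine le_min ?_ hle
  calc bwt n b x ≤ _ := Finset.card_le_card hsub
  _ ≤ _ := Finset.card_image_le
  _ ≤ b + k - 1 := by simp

lemma mem_bwt_filter {x : ZMod n → F} {b : ℕ} {i : ZMod n} (j : ℕ) (hj : j < b)
    (hx : x (i + (j : ZMod n)) ≠ 0) :
    i ∈ Finset.univ.filter (fun i : ZMod n => ∃ j < b, x (i + (j : ZMod n)) ≠ 0) :=
  Finset.mem_filter.mpr ⟨Finset.mem_univ _, j, hj, hx⟩

lemma bwt_two_ge {x : ZMod n → F} {a b : ZMod n} (ha : x a ≠ 0) (hb : x b ≠ 0)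
    (hab : a ≠ b) (h1 : a + 1 ≠ b) (h2 : b + 1 ≠ a) : 4 ≤ bwt n 2 x := by
  have h10 : (1 : ZMod n) ≠ 0 := by
    intro h
    have hn1 : n ∣ 1 := (ZMod.natCast_eq_zero_iff 1 n).mp (by simpa using h)
    have : n = 1 := Nat.dvd_one.mp hn1
    subst this
    exact hab (Subsingleton.elim a b)
  rw [bwt]
  have m1 : a - 1 ∈ _ := mem_bwt_filter (x := x) (b := 2) (i := a - 1) 1 one_lt_two
    (by rw [Nat.cast_one, sub_add_cancel]; exact ha)
  have m2 : a ∈ _ := mem_bwt_filter (x := x) (b := 2) (i := a) 0 two_pos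
    (by rw [Nat.cast_zero, add_zero]; exact ha)
  have m3 : b - 1 ∈ _ := mem_bwt_filter (x := x) (b := 2) (i := b - 1) 1 one_lt_two
    (by rw [Nat.cast_one, sub_add_cancel]; exact hb)
  have m4 : b ∈ _ := mem_bwt_filter (x := x) (b := 2) (i := b) 0 two_pos
    (by rw [Nat.cast_zero, add_zero]; exact hb)
  have hset : ({a - 1, a, b - 1, b} : Finset (ZMod n)) ⊆
      Finset.univ.filter (fun i : ZMod n => ∃ j < (2:ℕ), x (i + (j : ZMod n)) ≠ 0) := by
    intro i hi
    simp only [Finset.mem_insert, Finset.mem_singleton] at hi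
    rcases hi with rfl | rfl | rfl | rfl
    exacts [m1, m2, m3, m4]
  have d1 : a - 1 ≠ a := fun h => h10 (by linear_combination -h)
  have d2 : a - 1 ≠ b - 1 := fun h => hab (by linear_combination h)
  have d3 : a - 1 ≠ b := fun h => h2 (by linear_combination -h)
  have d4 : a ≠ b - 1 := fun h => h1 (by linear_combination h)
  have d5 : b - 1 ≠ b := fun h => h10 (by linear_combination -h)
  have hcard : ({a - 1, a, b - 1, b} : Finset (ZMod n)).card = 4 := by
    rw [Finset.card_insert_of_notMem (by simp [d1, d2, d3]),
        Finset.card_insert_of_notMem (by simp [hab, d4]),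
        Finset.card_insert_of_notMem (by simp [d5]), Finset.card_singleton]
  calc (4 : ℕ) = _ := hcard.symm
  _ ≤ _ := Finset.card_le_card hset

lemma two_le_bwt_one {x : ZMod n → F} {a c : ZMod n} (ha : x a ≠ 0) (hc : x c ≠ 0)
    (hac : a ≠ c) : 2 ≤ bwt n 1 x := by
  rw [bwt_one_eq]
  have hsub : ({a, c} : Finset (ZMod n)) ⊆ hSupp x := by
    intro j hj
    rw [hSupp, Finset.mem_filter]
    simp only [Finset.mem_insert, Finset.mem_singleton] at hj
    rcases hj with rfl | rfl
    exacts [⟨Finset.mem_univ _, ha⟩, ⟨Finset.mem_univ _, hc⟩]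
  calc (2:ℕ) = ({a, c} : Finset (ZMod n)).card := (Finset.card_pair hac).symm
  _ ≤ _ := Finset.card_le_card hsub

lemma three_le_bwt_one {x : ZMod n → F} {a c e : ZMod n} (ha : x a ≠ 0) (hc : x c ≠ 0)
    (he : x e ≠ 0) (hac : a ≠ c) (hae : a ≠ e) (hce : c ≠ e) : 3 ≤ bwt n 1 x := by
  rw [bwt_one_eq]
  have hsub : ({a, c, e} : Finset (ZMod n)) ⊆ hSupp x := by
    intro j hj
    rw [hSupp, Finset.mem_filter]
    simp only [Finset.mem_insert, Finset.mem_singleton] at hj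
    rcases hj with rfl | rfl | rfl
    exacts [⟨Finset.mem_univ _, ha⟩, ⟨Finset.mem_univ _, hc⟩, ⟨Finset.mem_univ _, he⟩]
  have hcard : ({a, c, e} : Finset (ZMod n)).card = 3 := by
    rw [Finset.card_insert_of_notMem (by simp [hac, hae]), Finset.card_pair hce]
  calc (3:ℕ) = _ := hcard.symm
  _ ≤ _ := Finset.card_le_card hsub

lemma bDist_eq_of {C : Submodule F (ZMod n → F)} {b m : ℕ}
    (x0 : ZMod n → F) (hx0 : x0 ∈ C) (hne : x0 ≠ 0) (hup : bwt n b x0 ≤ m)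
    (hlow : ∀ x ∈ C, x ≠ 0 → m ≤ bwt n b x) : bDist n b (C : Set (ZMod n → F)) = m := by
  have hmem : bwt n b x0 ∈ {w | ∃ u ∈ (C : Set (ZMod n → F)), ∃ v ∈ (C : Set (ZMod n → F)),
      u ≠ v ∧ bwt n b (u - v) = w} := ⟨x0, hx0, 0, C.zero_mem, hne, by rw [sub_zero]⟩
  rw [bDist]
  apply le_antisymm
  · exact le_trans (Nat.sInf_le hmem) hup
  · obtain ⟨u, hu, v, hv, huv, hw⟩ := Nat.sInf_mem (⟨_, hmem⟩ : Set.Nonempty _)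
    rw [← hw]
    exact hlow (u - v) (C.sub_mem hu hv) (sub_ne_zero_of_ne huv)

lemma exists_supp012 (hn : 3 ≤ n) (C : Submodule F (ZMod n → F))
    (hk : Module.finrank F C = n - 2) :
    ∃ x, x ∈ C ∧ x ≠ 0 ∧ ∀ i : ZMod n, x i ≠ 0 → i = 0 ∨ i = 1 ∨ i = 2 := by
  by_contra hcon
  push_neg at hcon
  set p : ZMod n → Prop := fun i => i = 0 ∨ i = 1 ∨ i = 2 with hp
  set ρ : C →ₗ[F] ({i : ZMod n // ¬ p i} → F) :=
    (LinearMap.funLeft F F (fun s : {i : ZMod n // ¬ p i} => (s : ZMod n))).comp C.subtype with hρ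
  have hinj : Function.Injective ρ := by
    rw [← LinearMap.ker_eq_bot]
    rw [Submodule.eq_bot_iff]
    rintro ⟨x, hxC⟩ hx
    rw [LinearMap.mem_ker] at hx
    ext1
    by_contra hxne
    obtain ⟨i, hxi, hpi⟩ := hcon x hxC hxne
    refine hxi (congrFun hx ⟨i, ?_⟩)
    simp only [hp]
    push_neg
    exact hpi
  have hfr : Module.finrank F C ≤ Module.finrank F ({i : ZMod n // ¬ p i} → F) :=
    LinearMap.finrank_le_finrank_of_injective hinj
  have hcard : Module.finrank F ({i : ZMod n // ¬ p i} → F) = Fintype.card {i : ZMod n // ¬ p i} :=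
    Module.finrank_pi F
  have hcompl : Fintype.card {i : ZMod n // ¬ p i} = Fintype.card (ZMod n) -
      Fintype.card {i : ZMod n // p i} := Fintype.card_subtype_compl p
  have hzc : Fintype.card (ZMod n) = n := ZMod.card n
  have hmem3 : ∀ k : ℕ, k < 3 → p ((k : ℕ) : ZMod n) := by
    intro k hk
    interval_cases k
    · exact Or.inl Nat.cast_zero
    · exact Or.inr (Or.inl Nat.cast_one)
    · exact Or.inr (Or.inr (by push_cast; rfl))
  have h3 : 3 ≤ Fintype.card {i : ZMod n // p i} := by
    have hfinj : Function.Injective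
        (fun k : Fin 3 => (⟨((k : ℕ) : ZMod n), hmem3 k k.isLt⟩ : {i : ZMod n // p i})) := by
      intro k1 k2 h
      have h' : (((k1 : ℕ)) : ZMod n) = (((k2 : ℕ)) : ZMod n) := Subtype.ext_iff.mp h
      have hv : (((k1 : ℕ)) : ZMod n).val = (((k2 : ℕ)) : ZMod n).val := congrArg ZMod.val h'
      rw [ZMod.val_cast_of_lt (lt_of_lt_of_le k1.isLt hn),
          ZMod.val_cast_of_lt (lt_of_lt_of_le k2.isLt hn)] at hv
      exact Fin.ext hv
    calc (3:ℕ) = Fintype.card (Fin 3) := by simp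
    _ ≤ _ := Fintype.card_le_of_injective _ hfinj
  have hple : Fintype.card {i : ZMod n // p i} ≤ Fintype.card (ZMod n) :=
    Fintype.card_subtype_le _
  omega

end Aux

/-- for an `[n, n-2]_q` linear code `C` with `n ≥ 3`, one of:
(a) `d_1(C) = 1` and `d_b(C) = b` for all `1 ≤ b ≤ n-1`;
(b)/(c) `d_1(C) = 2` and either `d_b(C) = b+1` for all `1 ≤ b ≤ n-1`, or
`d_b(C) = min{b+2, n}` for all `2 ≤ b ≤ n-1`;
(d) `d_1(C) = 3` and `d_b(C) = min{b+2, n}` for all `1 ≤ b ≤ n-1`. -/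
theorem stmt19 {F : Type*} [Field F] {n : ℕ} [NeZero n] (hn : 3 ≤ n)
    (C : Submodule F (ZMod n → F)) (hk : Module.finrank F C = n - 2) :
    (bDist n 1 (C : Set (ZMod n → F)) = 1 ∧
      ∀ b : ℕ, 1 ≤ b → b ≤ n - 1 → bDist n b (C : Set (ZMod n → F)) = b) ∨
    (bDist n 1 (C : Set (ZMod n → F)) = 2 ∧
      ((∀ b : ℕ, 1 ≤ b → b ≤ n - 1 → bDist n b (C : Set (ZMod n → F)) = b + 1) ∨
       (∀ b : ℕ, 2 ≤ b → b ≤ n - 1 →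
          bDist n b (C : Set (ZMod n → F)) = min (b + 2) n))) ∨
    (bDist n 1 (C : Set (ZMod n → F)) = 3 ∧
      ∀ b : ℕ, 1 ≤ b → b ≤ n - 1 →
        bDist n b (C : Set (ZMod n → F)) = min (b + 2) n) := by
  obtain ⟨x0, hx0C, hx0ne, hx0supp⟩ := exists_supp012 hn C hk
  have hx0win : ∀ i : ZMod n, x0 i ≠ 0 → ∃ t < 3, i + ((t : ℕ) : ZMod n) = 2 := by
    intro i hi
    rcases hx0supp i hi with rfl | rfl | rfl
    · exact ⟨2, by omega, by push_cast; ring⟩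
    · exact ⟨1, by omega, by push_cast; ring⟩
    · exact ⟨0, by omega, by push_cast; ring⟩
  have hx0up : ∀ b : ℕ, 1 ≤ b → bwt n b x0 ≤ min (b + 2) n := by
    intro b hb
    have h := bwt_upper hx0win b
    have he : b + 3 - 1 = b + 2 := by omega
    rwa [he] at h
  by_cases hP1 : ∃ y, y ∈ C ∧ y ≠ 0 ∧ ∃ i, ∀ j, y j ≠ 0 → j = i
  · -- case (a)
    obtain ⟨y, hyC, hyne, i, hysupp⟩ := hP1
    left
    have key : ∀ b : ℕ, 1 ≤ b → b ≤ n - 1 → bDist n b (C : Set (ZMod n → F)) = b := by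
      intro b hb1 hbn
      apply bDist_eq_of y hyC hyne
      · have hw : ∀ j : ZMod n, y j ≠ 0 → ∃ t < 1, j + ((t : ℕ) : ZMod n) = i :=
          fun j hj => ⟨0, zero_lt_one, by rw [hysupp j hj]; simp⟩
        have h := bwt_upper hw b
        omega
      · intro x hxC hxne
        obtain ⟨a, ha⟩ := exists_supp_ne hxne
        have h1 : 1 ≤ bwt n 1 x := by
          rw [bwt_one_eq]
          refine Finset.card_pos.mpr ⟨a, ?_⟩
          rw [hSupp, Finset.mem_filter]
          exact ⟨Finset.mem_univ _, ha⟩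
        have hc := bwt_chain hxne 1 b hb1
        omega
    exact ⟨key 1 le_rfl (by omega), key⟩
  · have low2 : ∀ x, x ∈ C → x ≠ 0 → 2 ≤ bwt n 1 x := by
      intro x hxC hxne
      obtain ⟨a, ha⟩ := exists_supp_ne hxne
      have hna : ¬ ∀ j, x j ≠ 0 → j = a := fun hall => hP1 ⟨x, hxC, hxne, a, hall⟩
      push_neg at hna
      obtain ⟨c, hc1, hc2⟩ := hna
      exact two_le_bwt_one ha hc1 (Ne.symm hc2)
    by_cases hAdj : ∃ y, y ∈ C ∧ y ≠ 0 ∧ ∃ i, ∀ j, y j ≠ 0 → j = i ∨ j = i + 1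
    · -- case (b)
      obtain ⟨y, hyC, hyne, i, hysupp⟩ := hAdj
      right; left
      have key : ∀ b : ℕ, 1 ≤ b → b ≤ n - 1 → bDist n b (C : Set (ZMod n → F)) = b + 1 := by
        intro b hb1 hbn
        apply bDist_eq_of y hyC hyne
        · have hw : ∀ j : ZMod n, y j ≠ 0 → ∃ t < 2, j + ((t : ℕ) : ZMod n) = i + 1 := by
            intro j hj
            rcases hysupp j hj with rfl | rfl
            · exact ⟨1, one_lt_two, by push_cast; ring⟩
            · exact ⟨0, by omega, by push_cast; ring⟩
          have h := bwt_upper hw b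
          omega
        · intro x hxC hxne
          have h2 := low2 x hxC hxne
          have hc := bwt_chain hxne 1 b hb1
          omega
      exact ⟨key 1 le_rfl (by omega), Or.inl key⟩
    · by_cases hQ2 : ∃ y, y ∈ C ∧ y ≠ 0 ∧ ∃ i k, ∀ j, y j ≠ 0 → j = i ∨ j = k
      · -- case (c)
        obtain ⟨y, hyC, hyne, i, k, hysupp⟩ := hQ2
        right; left
        refine ⟨?_, Or.inr ?_⟩
        · apply bDist_eq_of y hyC hyne
          · rw [bwt_one_eq]
            have hsub : hSupp y ⊆ {i, k} := by
              intro j hj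
              rw [hSupp, Finset.mem_filter] at hj
              simp only [Finset.mem_insert, Finset.mem_singleton]
              exact hysupp j hj.2
            calc (hSupp y).card ≤ ({i, k} : Finset (ZMod n)).card := Finset.card_le_card hsub
            _ ≤ 2 := le_trans (Finset.card_insert_le _ _) (by simp)
          · exact low2
        · intro b hb2 hbn
          apply bDist_eq_of x0 hx0C hx0ne (hx0up b (by omega))
          intro x hxC hxne
          by_cases h3 : ∃ a c e : ZMod n, x a ≠ 0 ∧ x c ≠ 0 ∧ x e ≠ 0 ∧ a ≠ c ∧ a ≠ e ∧ c ≠ e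
          · obtain ⟨a, c, e, ha, hc, he', hac, hae, hce⟩ := h3
            have h3' := three_le_bwt_one ha hc he' hac hae hce
            have hch := bwt_chain hxne 1 b (by omega)
            omega
          · obtain ⟨a, ha⟩ := exists_supp_ne hxne
            have hna : ¬ ∀ j, x j ≠ 0 → j = a := fun hall => hP1 ⟨x, hxC, hxne, a, hall⟩
            push_neg at hna
            obtain ⟨c, hc1, hc2⟩ := hna
            have hsupp2 : ∀ j, x j ≠ 0 → j = a ∨ j = c := by
              intro j hj
              by_contra hcon
              push_neg at hcon
              exact h3 ⟨a, c, j, ha, hc1, hj, Ne.symm hc2, Ne.symm hcon.1, Ne.symm hcon.2⟩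
            have hna1 : a + 1 ≠ c := by
              intro he
              refine hAdj ⟨x, hxC, hxne, a, fun j hj => ?_⟩
              rcases hsupp2 j hj with h | h
              · exact Or.inl h
              · exact Or.inr (by rw [h, ← he])
            have hna2 : c + 1 ≠ a := by
              intro he
              refine hAdj ⟨x, hxC, hxne, c, fun j hj => ?_⟩
              rcases hsupp2 j hj with h | h
              · exact Or.inr (by rw [h, ← he])
              · exact Or.inl h
            have h4 := bwt_two_ge ha hc1 (Ne.symm hc2) hna1 hna2
            have hch := bwt_chain hxne 2 b hb2
            omega
      · -- case (d)
        right; right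
        have low3 : ∀ x, x ∈ C → x ≠ 0 → 3 ≤ bwt n 1 x := by
          intro x hxC hxne
          obtain ⟨a, ha⟩ := exists_supp_ne hxne
          have h1 : ¬ ∀ j, x j ≠ 0 → j = a ∨ j = a := fun hall => hQ2 ⟨x, hxC, hxne, a, a, hall⟩
          push_neg at h1
          obtain ⟨c, hc1, hc2, -⟩ := h1
          have h2 : ¬ ∀ j, x j ≠ 0 → j = a ∨ j = c := fun hall => hQ2 ⟨x, hxC, hxne, a, c, hall⟩
          push_neg at h2
          obtain ⟨e, he1, he2, he3⟩ := h2
          exact three_le_bwt_one ha hc1 he1 (Ne.symm hc2) (Ne.symm he2) (Ne.symm he3)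
        have key : ∀ b : ℕ, 1 ≤ b → b ≤ n - 1 →
            bDist n b (C : Set (ZMod n → F)) = min (b + 2) n := by
          intro b hb1 hbn
          apply bDist_eq_of x0 hx0C hx0ne (hx0up b hb1)
          intro x hxC hxne
          have h3 := low3 x hxC hxne
          have hch := bwt_chain hxne 1 b hb1
          omega
        refine ⟨?_, key⟩
        have h := key 1 le_rfl (by omega)
        rw [h]
        omega
end
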